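/- arXiv:1003.1968 — 5 statements merged into one kernel-verified Lean document; each statement's English description precedes it below -/
import Mathlib

section
/- Let A, B, C be n×n complex matrices such that there exist invertible matrices P and Q with PAQ, PBQ, and PCQ all diagonal. Then A·adj(B)·C = C·adj(B)·A, where adj(B) denotes the adjugate (classical adjoint) matrix of B. -/
/-!
Diagonal matrices commute and the adjugate of a diagonal matrix is diagonal, so the identity
holds for `P A Q`, `P B Q`, `P C Q`. It survives the passage back to `A`, `B`, `C` because
`adjugate (P Y Q) = adjugate Q * adjugate Y * adjugate P` and the inner products
`Q * adjugate Q`, `adjugate P * P` collapse to the scalars `det Q`, `det P`.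
-/

open Matrix

namespace Matrix

variable {n R : Type*} [Fintype n] [DecidableEq n] [CommRing R]

theorem IsDiag.mul_adjugate_mul_comm {X Y Z : Matrix n n R}
    (hX : X.IsDiag) (hY : Y.IsDiag) (hZ : Z.IsDiag) :
    X * adjugate Y * Z = Z * adjugate Y * X := by
  rw [← hX.diagonal_diag, ← hY.diagonal_diag, ← hZ.diagonal_diag, adjugate_diagonal]
  simp only [diagonal_mul_diagonal]
  exact congrArg diagonal (funext fun i => by ring)

theorem mul_adjugate_mul_sandwich (P Q X Y Z : Matrix n n R) :
    (P * X * Q) * adjugate (P * Y * Q) * (P * Z * Q)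
      = (Q.det * P.det) • (P * (X * adjugate Y * Z) * Q) := by
  rw [adjugate_mul_distrib, adjugate_mul_distrib]
  simp only [mul_assoc]
  rw [← mul_assoc Q (adjugate Q), mul_adjugate, ← mul_assoc (adjugate P) P, adjugate_mul]
  simp only [Matrix.smul_mul, Matrix.mul_smul, one_mul, smul_smul]
  rw [mul_comm Q.det P.det]

theorem mul_adjugate_mul_comm_sandwich {X Y Z : Matrix n n R} (P Q : Matrix n n R)
    (h : X * adjugate Y * Z = Z * adjugate Y * X) :
    (P * X * Q) * adjugate (P * Y * Q) * (P * Z * Q)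
      = (P * Z * Q) * adjugate (P * Y * Q) * (P * X * Q) := by
  rw [mul_adjugate_mul_sandwich, mul_adjugate_mul_sandwich, h]

end Matrix

theorem stmt1 {n : ℕ} (A B C : Matrix (Fin n) (Fin n) ℂ)
    (P Q : Matrix (Fin n) (Fin n) ℂ) (hP : IsUnit P) (hQ : IsUnit Q)
    (hA : (P * A * Q).IsDiag) (hB : (P * B * Q).IsDiag) (hC : (P * C * Q).IsDiag) :
    A * adjugate B * C = C * adjugate B * A := by
  obtain ⟨P, rfl⟩ := hP
  obtain ⟨Q, rfl⟩ := hQ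
  have unsandwich : ∀ M : Matrix (Fin n) (Fin n) ℂ,
      M = P⁻¹.val * (P.val * M * Q.val) * Q⁻¹.val := by
    intro M
    simp [mul_assoc]
  rw [unsandwich A, unsandwich B, unsandwich C]
  exact mul_adjugate_mul_comm_sandwich _ _ (hA.mul_adjugate_mul_comm hB hC)
end

section
/- Let U be a linear subspace of m×m complex matrices and suppose there exists a nonzero vector u ∈ ℂ^m with A u = 0 for every A ∈ U. Then for any X, Y, Z ∈ U one has X·adj(Y)·Z − Z·adj(Y)·X = 0. -/
/-!
If `Y` kills `u ≠ 0` and `adj Y ≠ 0`, say `adj Y i j ≠ 0`, then replacing row `j` of `Y` by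
the `i`-th unit row gives a matrix of determinant `adj Y i j`, hence injective; on the kernel
of `Y` it acts as `v ↦ v i • eⱼ`, so that kernel is the line through `u`. Since
`Y * adj Y = det Y • 1 = 0`, the range of `adj Y` lies on that line, so every `W` with
`W u = 0` satisfies `W * adj Y = 0`.
Both products in `X * adj Y * Z - Z * adj Y * X` therefore vanish.
-/

open Matrix

namespace Matrix

variable {n R : Type*} [Fintype n] [DecidableEq n] [CommRing R] [IsDomain R]

theorem eq_zero_of_mulVec_eq_zero_of_adjugate_apply_ne_zero {Y : Matrix n n R} {v : n → R}
    {i j : n} (hYv : Y *ᵥ v = 0) (hij : adjugate Y i j ≠ 0) (hvi : v i = 0) : v = 0 := by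
  have hBv : Y.updateRow j (Pi.single i 1) *ᵥ v = 0 := by
    rw [updateRow_mulVec, hYv, single_one_dotProduct, hvi, Function.update_eq_self_iff]
    rfl
  by_contra hv
  exact hij (adjugate_apply Y i j ▸ exists_mulVec_eq_zero_iff.mp ⟨v, hv, hBv⟩)

theorem smul_eq_smul_of_mulVec_eq_zero_of_adjugate_apply_ne_zero {Y : Matrix n n R}
    {v w : n → R} {i j : n} (hYv : Y *ᵥ v = 0) (hYw : Y *ᵥ w = 0)
    (hij : adjugate Y i j ≠ 0) : w i • v = v i • w :=
  sub_eq_zero.mp <| eq_zero_of_mulVec_eq_zero_of_adjugate_apply_ne_zero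
    (by rw [mulVec_sub, mulVec_smul, mulVec_smul, hYv, hYw, smul_zero, smul_zero, sub_self])
    hij (by simp [mul_comm])

theorem mul_adjugate_eq_zero_of_mulVec_eq_zero {Y W : Matrix n n R} {u : n → R} (hu : u ≠ 0)
    (hYu : Y *ᵥ u = 0) (hWu : W *ᵥ u = 0) : W * adjugate Y = 0 := by
  by_cases hadj : adjugate Y = 0
  · rw [hadj, mul_zero]
  obtain ⟨i, j, hij⟩ : ∃ i j, adjugate Y i j ≠ 0 := by
    by_contra! h
    exact hadj (ext h)
  have hui : u i ≠ 0 := fun h =>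
    hu (eq_zero_of_mulVec_eq_zero_of_adjugate_apply_ne_zero hYu hij h)
  have hdet : Y.det = 0 := exists_mulVec_eq_zero_iff.mp ⟨u, hu, hYu⟩
  refine ext_iff_mulVec.mpr fun v => ?_
  set c := adjugate Y *ᵥ v
  have hYc : Y *ᵥ c = 0 := by rw [mulVec_mulVec, mul_adjugate, hdet, zero_smul, zero_mulVec]
  have hc : u i • c = c i • u :=
    smul_eq_smul_of_mulVec_eq_zero_of_adjugate_apply_ne_zero hYc hYu hij
  have hWc : u i • (W *ᵥ c) = 0 := by rw [← mulVec_smul, hc, mulVec_smul, hWu, smul_zero]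
  rw [← mulVec_mulVec, zero_mulVec]
  exact (smul_eq_zero.mp hWc).resolve_left hui

end Matrix

theorem stmt4 {m : ℕ} (U : Submodule ℂ (Matrix (Fin m) (Fin m) ℂ))
    (u : Fin m → ℂ) (hu : u ≠ 0) (hU : ∀ A ∈ U, A.mulVec u = 0)
    (X Y Z : Matrix (Fin m) (Fin m) ℂ) (hX : X ∈ U) (hY : Y ∈ U) (hZ : Z ∈ U) :
    X * adjugate Y * Z - Z * adjugate Y * X = 0 := by
  have hYu := hU Y hY
  rw [mul_adjugate_eq_zero_of_mulVec_eq_zero hu hYu (hU X hX),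
    mul_adjugate_eq_zero_of_mulVec_eq_zero hu hYu (hU Z hZ), zero_mul, zero_mul, sub_zero]
end

section
/- Let m ≥ 2 and let U ⊆ ℂ^{m×m} be the linear span of the matrices E_{ii} = e_i e_iᵀ for i = 1,…,m together with z zᵀ, where z ∈ ℂ^m has all coordinates nonzero and z is not a scalar multiple of any e_i. If L ∈ ℂ^{m×m} satisfies that L·M is symmetric for every M ∈ U, then L = d·I for some scalar d ∈ ℂ. -/
/-! If `L * E_ii` is symmetric then the `i`-th column of `L` vanishes off the diagonal, so `L` is
diagonal, say `L = diagonal d`. Then `(L * z zᵀ) j k = d j * z j * z k`, and symmetry of this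
matrix together with `z j * z k ≠ 0` forces `d j = d k`. -/

open Matrix

namespace Matrix

variable {n R : Type*} [DecidableEq n]

theorem isDiag_of_forall_isSymm_mul_single [Fintype n] [Semiring R] (L : Matrix n n R)
    (hL : ∀ i, (L * single i i 1).IsSymm) : L.IsDiag := by
  intro j i hji
  have h := (hL i).apply j i
  rw [mul_single_apply_same, mul_one, mul_single_apply_of_ne _ _ _ _ _ hji] at h
  exact h.symm

theorem eq_of_isSymm_diagonal_mul_vecMulVec_self [Fintype n] [CommRing R] [IsDomain R]
    {d z : n → R} (hz : ∀ i, z i ≠ 0) (hL : (diagonal d * vecMulVec z z).IsSymm) (j k : n) :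
    d j = d k := by
  have h := hL.apply j k
  simp only [diagonal_mul, vecMulVec_apply] at h
  refine mul_right_cancel₀ (mul_ne_zero (hz j) (hz k)) ?_
  linear_combination -h

theorem exists_eq_smul_one_of_diagonal_const [Semiring R] {d : n → R}
    (hd : ∀ j k, d j = d k) : ∃ c : R, diagonal d = c • 1 := by
  cases isEmpty_or_nonempty n with
  | inl _ => exact ⟨0, Subsingleton.elim _ _⟩
  | inr h =>
    obtain ⟨i⟩ := h
    exact ⟨d i, by rw [smul_one_eq_diagonal]; exact congrArg diagonal (funext (hd · i))⟩

end Matrix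

theorem stmt10_general {m : ℕ} (z : Fin m → ℂ)
    (hz : ∀ i, z i ≠ 0)
    (L : Matrix (Fin m) (Fin m) ℂ)
    (hL : ∀ M ∈ Submodule.span ℂ
        ({vecMulVec z z} ∪
          Set.range (fun i : Fin m =>
            vecMulVec (Pi.single i 1) (Pi.single i (1 : ℂ)))),
      (L * M)ᵀ = L * M) :
    ∃ d : ℂ, L = d • (1 : Matrix (Fin m) (Fin m) ℂ) := by
  have hdiag : L.IsDiag := isDiag_of_forall_isSymm_mul_single L fun i => by
    rw [single_eq_single_vecMulVec_single]
    exact hL _ (Submodule.subset_span (Or.inr ⟨i, rfl⟩))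
  rw [← hdiag.diagonal_diag] at hL ⊢
  exact exists_eq_smul_one_of_diagonal_const
    (eq_of_isSymm_diagonal_mul_vecMulVec_self hz
      (hL _ (Submodule.subset_span (Or.inl rfl))))

theorem stmt10 {m : ℕ} (hm : 2 ≤ m) (z : Fin m → ℂ)
    (hz : ∀ i, z i ≠ 0)
    (hz' : ∀ (i : Fin m) (c : ℂ), z ≠ c • (Pi.single i 1 : Fin m → ℂ))
    (L : Matrix (Fin m) (Fin m) ℂ)
    (hL : ∀ M ∈ Submodule.span ℂ
        ({vecMulVec z z} ∪
          Set.range (fun i : Fin m =>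
            vecMulVec (Pi.single i 1) (Pi.single i (1 : ℂ)))),
      (L * M)ᵀ = L * M) :
    ∃ d : ℂ, L = d • (1 : Matrix (Fin m) (Fin m) ℂ) :=
  stmt10_general z hz L hL
end

section
/- Let T₁ = I₃, let T₂ be a 3×3 diagonal matrix with three distinct diagonal entries, and let T₃ = S be a symmetric 3×3 matrix with all entries nonzero. If R ∈ ℂ^{3×3} satisfies T_k R − Rᵀ T_kᵀ = 0 for k = 1,2,3, then R = r·I₃ for some scalar r ∈ ℂ. -/
open Matrix

namespace Matrix

variable {n α : Type*} [Fintype n] [CommRing α]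

theorem isSymm_mul_of_mul_sub_transpose_mul_eq_zero {T R : Matrix n n α}
    (h : T * R - Rᵀ * Tᵀ = 0) : (T * R).IsSymm := by
  rw [IsSymm, transpose_mul]
  exact (sub_eq_zero.mp h).symm

variable [DecidableEq n] [NoZeroDivisors α]

theorem isDiag_of_isSymm_of_isSymm_diagonal_mul {d : n → α} (hd : Function.Injective d)
    {R : Matrix n n α} (hR : R.IsSymm) (hdR : (diagonal d * R).IsSymm) : R.IsDiag := by
  intro i j hij
  have hij' : d j * R i j = d i * R i j := by
    simpa only [transpose_apply, diagonal_mul, hR.apply] using hdR.apply i j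
  have : (d i - d j) * R i j = 0 := by linear_combination -hij'
  exact (mul_eq_zero.mp this).resolve_left (sub_ne_zero.mpr (hd.ne hij))

theorem eq_of_isSymm_mul_diagonal {S : Matrix n n α} (hS : S.IsSymm) {e : n → α}
    (hSe : (S * diagonal e).IsSymm) {i j : n} (hSij : S i j ≠ 0) : e i = e j := by
  have h : S i j * e i = S i j * e j := by
    simpa only [transpose_apply, mul_diagonal, hS.apply] using hSe.apply i j
  exact mul_left_cancel₀ hSij h

end Matrix

theorem stmt11 (d : Fin 3 → ℂ) (hd : Function.Injective d)
    (S : Matrix (Fin 3) (Fin 3) ℂ) (hS : Sᵀ = S) (hS0 : ∀ i j, S i j ≠ 0)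
    (R : Matrix (Fin 3) (Fin 3) ℂ)
    (h1 : (1 : Matrix (Fin 3) (Fin 3) ℂ) * R - Rᵀ * (1 : Matrix (Fin 3) (Fin 3) ℂ)ᵀ = 0)
    (h2 : diagonal d * R - Rᵀ * (diagonal d)ᵀ = 0)
    (h3 : S * R - Rᵀ * Sᵀ = 0) :
    ∃ r : ℂ, R = r • (1 : Matrix (Fin 3) (Fin 3) ℂ) := by
  have hR : R.IsSymm := by
    simpa only [one_mul] using isSymm_mul_of_mul_sub_transpose_mul_eq_zero h1
  have hRdiag : R.IsDiag :=
    isDiag_of_isSymm_of_isSymm_diagonal_mul hd hR (isSymm_mul_of_mul_sub_transpose_mul_eq_zero h2)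
  rw [← hRdiag.diagonal_diag] at h3 ⊢
  have hconst : ∀ i, R.diag i = R.diag 0 := fun i =>
    (eq_of_isSymm_mul_diagonal hS (isSymm_mul_of_mul_sub_transpose_mul_eq_zero h3) (hS0 0 i)).symm
  exact ⟨R.diag 0, by rw [smul_one_eq_diagonal]; exact congrArg diagonal (funext hconst)⟩
end

section
/- There exist 3×3 matrices T₁, T₂, T₃ over ℂ such that the only matrix R ∈ ℂ^{3×3} satisfying T_k R − Rᵀ T_kᵀ = 0 for k = 1,2,3 is R = 0. Concretely, one may take T₁ = I, T₂ = diag(1,2,3), and T₃ = [s_{ij}] with all s_{ij} ≠ 0, s₁₂ = s₂₁, s₁₃ = s₃₁, s₂₃ ≠ s₃₂. -/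
/-!
Each condition `T * R - Rᵀ * Tᵀ = 0` says that `T * R` is symmetric. For `T = 1` this makes `R`
symmetric; then `diagonal d * R` symmetric means `d i * R i j = d j * R i j`, so distinct `d i`
force `R` to be diagonal, say `R = diagonal r`. Finally `S * diagonal r` symmetric means
`S j i * r i = S i j * r j`: a symmetric nonzero entry `S i j = S j i` gives `r i = r j`, so `r` is
constant, and an asymmetric pair `S i j ≠ S j i` then forces that constant to be `0`.
-/

open Matrix

namespace Matrix

variable {n α : Type*}

theorem mul_sub_transpose_mul_transpose_eq_zero_iff [CommRing α] [Fintype n]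
    {T R : Matrix n n α} : T * R - Rᵀ * Tᵀ = 0 ↔ (T * R).IsSymm := by
  rw [sub_eq_zero, IsSymm, transpose_mul, eq_comm]

theorem IsSymm.isDiag_of_isSymm_diagonal_mul [CommRing α] [NoZeroDivisors α] [Fintype n]
    [DecidableEq n] {R : Matrix n n α} {d : n → α} (hd : Function.Injective d)
    (hR : R.IsSymm) (hdR : (diagonal d * R).IsSymm) : R.IsDiag := by
  intro i j hij
  have hcomm : d j * R i j = d i * R i j := by
    simpa only [diagonal_mul, hR.apply i j] using hdR.apply i j
  have hsub : (d j - d i) * R i j = 0 := by rw [sub_mul, hcomm, sub_self]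
  exact (mul_eq_zero.mp hsub).resolve_left (sub_ne_zero.mpr (hd.ne (Ne.symm hij)))

section MulDiagonal

variable [CommRing α] [Fintype n] [DecidableEq n]
  {S : Matrix n n α} {r : n → α}

theorem IsSymm.mul_diagonal_apply (h : (S * diagonal r).IsSymm) (i j : n) :
    S j i * r i = S i j * r j := by
  simpa only [mul_diagonal] using h.apply i j

theorem IsSymm.eq_of_mul_diagonal [NoZeroDivisors α] (h : (S * diagonal r).IsSymm) {i j : n}
    (hS : S i j = S j i) (hS₀ : S i j ≠ 0) : r i = r j :=
  mul_left_cancel₀ hS₀ (by rw [← h.mul_diagonal_apply i j, hS])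

theorem IsSymm.eq_zero_of_mul_diagonal [NoZeroDivisors α] (h : (S * diagonal r).IsSymm) {i j : n}
    (hr : r i = r j) (hS : S i j ≠ S j i) : r i = 0 := by
  have hsub : (S j i - S i j) * r i = 0 := by
    rw [sub_mul, h.mul_diagonal_apply i j, hr, sub_self]
  exact (mul_eq_zero.mp hsub).resolve_left (sub_ne_zero.mpr (Ne.symm hS))

end MulDiagonal

theorem eq_zero_of_isSymm_of_isSymm_diagonal_mul_of_isSymm_mul [Field α] [CharZero α]
    {S R : Matrix (Fin 3) (Fin 3) α} (hR : R.IsSymm) (hdR : (diagonal ![1, 2, 3] * R).IsSymm)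
    (hSR : (S * R).IsSymm) (h01 : S 0 1 = S 1 0) (h02 : S 0 2 = S 2 0)
    (h01₀ : S 0 1 ≠ 0) (h02₀ : S 0 2 ≠ 0) (h12 : S 1 2 ≠ S 2 1) : R = 0 := by
  have hd : Function.Injective (![1, 2, 3] : Fin 3 → α) := by
    intro i j h
    fin_cases i <;> fin_cases j <;> simp_all
  have hdiag := (hR.isDiag_of_isSymm_diagonal_mul hd hdR).diagonal_diag
  rw [← hdiag] at hSR ⊢
  have hr01 := hSR.eq_of_mul_diagonal h01 h01₀
  have hr02 := hSR.eq_of_mul_diagonal h02 h02₀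
  have hr1 : R.diag 1 = 0 := hSR.eq_zero_of_mul_diagonal (hr01.symm.trans hr02) h12
  have hr : R.diag = 0 := by
    funext i
    fin_cases i
    exacts [hr01.trans hr1, hr1, hr02.symm.trans (hr01.trans hr1)]
  rw [hr]; exact diagonal_zero

end Matrix

theorem stmt12 :
    ∃ T₁ T₂ T₃ : Matrix (Fin 3) (Fin 3) ℂ,
      T₁ = 1 ∧ T₂ = diagonal ![1, 2, 3] ∧
      (∀ i j, T₃ i j ≠ 0) ∧ T₃ 0 1 = T₃ 1 0 ∧ T₃ 0 2 = T₃ 2 0 ∧ T₃ 1 2 ≠ T₃ 2 1 ∧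
      ∀ R : Matrix (Fin 3) (Fin 3) ℂ,
        T₁ * R - Rᵀ * T₁ᵀ = 0 → T₂ * R - Rᵀ * T₂ᵀ = 0 → T₃ * R - Rᵀ * T₃ᵀ = 0 →
        R = 0 := by
  have hS₀ : ∀ i j, !![1, 1, 1; 1, 1, 1; 1, 2, 1] i j ≠ (0 : ℂ) := by
    intro i j
    fin_cases i <;> fin_cases j <;> norm_num
  refine ⟨1, diagonal ![1, 2, 3], !![1, 1, 1; 1, 1, 1; 1, 2, 1], rfl, rfl, hS₀, rfl, rfl,
    by simp, ?_⟩
  intro R h₁ h₂ h₃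
  rw [mul_sub_transpose_mul_transpose_eq_zero_iff] at h₁ h₂ h₃
  rw [one_mul] at h₁
  exact eq_zero_of_isSymm_of_isSymm_diagonal_mul_of_isSymm_mul h₁ h₂ h₃ rfl rfl
    (hS₀ 0 1) (hS₀ 0 2) (by simp)
end
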